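/- For the quantum harmonic oscillator system E3 with operators L₁ = ∂ₓ² − ω²x², L₃ = ∂ₓ∂_y − ω²xy, X = x∂_y − y∂ₓ, H = ∂ₓ² + ∂_y² − ω²(x²+y²), acting on smooth functions of (x,y), the structure equations hold: [L₁,X] = 2L₃, [L₃,X] = H − 2L₁, and [L₁,L₃] = 2ω²X. -/

import Mathlib

noncomputable section

/-- Partial derivative in `x` of a function on `ℝ²`. -/
def dx (f : ℝ × ℝ → ℂ) : ℝ × ℝ → ℂ := fun p => fderiv ℝ f p (1, 0)

/-- Partial derivative in `y` of a function on `ℝ²`. -/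
def dy (f : ℝ × ℝ → ℂ) : ℝ × ℝ → ℂ := fun p => fderiv ℝ f p (0, 1)

/-- `L₁ = ∂ₓ² − ω²x²`. -/
def L1 (ω : ℂ) (f : ℝ × ℝ → ℂ) : ℝ × ℝ → ℂ :=
  fun p => dx (dx f) p - ω ^ 2 * (p.1 : ℂ) ^ 2 * f p

/-- `L₃ = ∂ₓ∂_y − ω²xy`. -/
def L3 (ω : ℂ) (f : ℝ × ℝ → ℂ) : ℝ × ℝ → ℂ :=
  fun p => dx (dy f) p - ω ^ 2 * (p.1 : ℂ) * (p.2 : ℂ) * f p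

/-- `X = x∂_y − y∂ₓ`. -/
def Xop (f : ℝ × ℝ → ℂ) : ℝ × ℝ → ℂ :=
  fun p => (p.1 : ℂ) * dy f p - (p.2 : ℂ) * dx f p

/-- `H = ∂ₓ² + ∂_y² − ω²(x²+y²)`. -/
def Hop (ω : ℂ) (f : ℝ × ℝ → ℂ) : ℝ × ℝ → ℂ :=
  fun p => dx (dx f) p + dy (dy f) p - ω ^ 2 * ((p.1 : ℂ) ^ 2 + (p.2 : ℂ) ^ 2) * f p

@[fun_prop] lemma contDiff_dx {f : ℝ × ℝ → ℂ} (hf : ContDiff ℝ (⊤ : ℕ∞) f) : ContDiff ℝ (⊤ : ℕ∞) (dx f) := by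
  unfold dx
  exact (hf.fderiv_right (le_refl _)).clm_apply contDiff_const

@[fun_prop] lemma contDiff_dy {f : ℝ × ℝ → ℂ} (hf : ContDiff ℝ (⊤ : ℕ∞) f) : ContDiff ℝ (⊤ : ℕ∞) (dy f) := by
  unfold dy
  exact (hf.fderiv_right (le_refl _)).clm_apply contDiff_const

@[fun_prop] lemma differentiable_dx {f : ℝ × ℝ → ℂ} (hf : ContDiff ℝ (⊤ : ℕ∞) f) :
    Differentiable ℝ (dx f) := (contDiff_dx hf).differentiable (by simp)

@[fun_prop] lemma differentiable_dy {f : ℝ × ℝ → ℂ} (hf : ContDiff ℝ (⊤ : ℕ∞) f) :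
    Differentiable ℝ (dy f) := (contDiff_dy hf).differentiable (by simp)

@[fun_prop] lemma differentiable_ofReal : Differentiable ℝ (Complex.ofReal) :=
  Complex.ofRealCLM.differentiable

@[fun_prop] lemma contDiff_ofReal : ContDiff ℝ (⊤ : ℕ∞) (Complex.ofReal) :=
  Complex.ofRealCLM.contDiff

lemma dx_sub {g h : ℝ × ℝ → ℂ} (hg : Differentiable ℝ g) (hh : Differentiable ℝ h) :
    dx (fun q => g q - h q) = fun p => dx g p - dx h p := by
  funext p; simp [dx, fderiv_fun_sub (hg p) (hh p)]

lemma dy_sub {g h : ℝ × ℝ → ℂ} (hg : Differentiable ℝ g) (hh : Differentiable ℝ h) :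
    dy (fun q => g q - h q) = fun p => dy g p - dy h p := by
  funext p; simp [dy, fderiv_fun_sub (hg p) (hh p)]

lemma dx_add {g h : ℝ × ℝ → ℂ} (hg : Differentiable ℝ g) (hh : Differentiable ℝ h) :
    dx (fun q => g q + h q) = fun p => dx g p + dx h p := by
  funext p; simp [dx, fderiv_fun_add (hg p) (hh p)]

lemma dy_add {g h : ℝ × ℝ → ℂ} (hg : Differentiable ℝ g) (hh : Differentiable ℝ h) :
    dy (fun q => g q + h q) = fun p => dy g p + dy h p := by
  funext p; simp [dy, fderiv_fun_add (hg p) (hh p)]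

lemma dx_mul {g h : ℝ × ℝ → ℂ} (hg : Differentiable ℝ g) (hh : Differentiable ℝ h) :
    dx (fun q => g q * h q) = fun p => dx g p * h p + g p * dx h p := by
  funext p; simp [dx, fderiv_fun_mul (hg p) (hh p)]; ring

lemma dy_mul {g h : ℝ × ℝ → ℂ} (hg : Differentiable ℝ g) (hh : Differentiable ℝ h) :
    dy (fun q => g q * h q) = fun p => dy g p * h p + g p * dy h p := by
  funext p; simp [dy, fderiv_fun_mul (hg p) (hh p)]; ring

lemma dx_const (c : ℂ) : dx (fun _ => c) = fun _ => 0 := by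
  funext p; simp [dx]

lemma dy_const (c : ℂ) : dy (fun _ => c) = fun _ => 0 := by
  funext p; simp [dy]

lemma coord1_eq : (fun q : ℝ × ℝ => (q.1 : ℂ)) =
    (Complex.ofRealCLM.comp (ContinuousLinearMap.fst ℝ ℝ ℝ) : (ℝ × ℝ) →L[ℝ] ℂ) := rfl

lemma coord2_eq : (fun q : ℝ × ℝ => (q.2 : ℂ)) =
    (Complex.ofRealCLM.comp (ContinuousLinearMap.snd ℝ ℝ ℝ) : (ℝ × ℝ) →L[ℝ] ℂ) := rfl

lemma dx_coord1 : dx (fun q : ℝ × ℝ => (q.1 : ℂ)) = fun _ => 1 := by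
  funext p
  show fderiv ℝ (fun q : ℝ × ℝ => (q.1 : ℂ)) p (1, 0) = 1
  rw [coord1_eq, ContinuousLinearMap.fderiv]
  simp

lemma dx_coord2 : dx (fun q : ℝ × ℝ => (q.2 : ℂ)) = fun _ => 0 := by
  funext p
  show fderiv ℝ (fun q : ℝ × ℝ => (q.2 : ℂ)) p (1, 0) = 0
  rw [coord2_eq, ContinuousLinearMap.fderiv]
  simp

lemma dy_coord1 : dy (fun q : ℝ × ℝ => (q.1 : ℂ)) = fun _ => 0 := by
  funext p
  show fderiv ℝ (fun q : ℝ × ℝ => (q.1 : ℂ)) p (0, 1) = 0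
  rw [coord1_eq, ContinuousLinearMap.fderiv]
  simp

lemma dy_coord2 : dy (fun q : ℝ × ℝ => (q.2 : ℂ)) = fun _ => 1 := by
  funext p
  show fderiv ℝ (fun q : ℝ × ℝ => (q.2 : ℂ)) p (0, 1) = 1
  rw [coord2_eq, ContinuousLinearMap.fderiv]
  simp

lemma dy_dx {g : ℝ × ℝ → ℂ} (hg : ContDiff ℝ (⊤ : ℕ∞) g) : dy (dx g) = dx (dy g) := by
  funext p
  have hsymm : IsSymmSndFDerivAt ℝ g p := hg.contDiffAt.isSymmSndFDerivAt (by rw [minSmoothness_of_isRCLikeNormedField]; exact WithTop.coe_le_coe.mpr (le_top : (2 : ℕ∞) ≤ ⊤))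
  have hdf : DifferentiableAt ℝ (fderiv ℝ g) p :=
    ((hg.fderiv_right (m := (⊤ : ℕ∞)) (by simp)).differentiable (by simp)) p
  have key : ∀ v w : ℝ × ℝ, fderiv ℝ (fun q => fderiv ℝ g q v) p w =
      fderiv ℝ (fderiv ℝ g) p w v := by
    intro v w
    have h := (hdf.hasFDerivAt.clm_apply (hasFDerivAt_const v p)).fderiv
    rw [h]
    simp
  show fderiv ℝ (fun q => fderiv ℝ g q (1,0)) p (0,1) =
       fderiv ℝ (fun q => fderiv ℝ g q (0,1)) p (1,0)
  rw [key, key]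
  exact hsymm _ _

lemma L1_def (ω : ℂ) (f : ℝ × ℝ → ℂ) :
    L1 ω f = fun p => dx (dx f) p - ω ^ 2 * (p.1 : ℂ) ^ 2 * f p := rfl
lemma L3_def (ω : ℂ) (f : ℝ × ℝ → ℂ) :
    L3 ω f = fun p => dx (dy f) p - ω ^ 2 * (p.1 : ℂ) * (p.2 : ℂ) * f p := rfl
lemma Xop_def (f : ℝ × ℝ → ℂ) :
    Xop f = fun p => (p.1 : ℂ) * dy f p - (p.2 : ℂ) * dx f p := rfl
lemma Hop_def (ω : ℂ) (f : ℝ × ℝ → ℂ) :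
    Hop ω f = fun p => dx (dx f) p + dy (dy f) p - ω ^ 2 * ((p.1 : ℂ) ^ 2 + (p.2 : ℂ) ^ 2) * f p := rfl

/-- E3 structure equations: `[L₁,X] = 2L₃`, `[L₃,X] = H − 2L₁`,
`[L₁,L₃] = 2ω²X` on smooth functions. -/
theorem stmt4 (ω : ℂ) (f : ℝ × ℝ → ℂ) (hf : ContDiff ℝ (⊤ : ℕ∞) f) :
    (∀ p, L1 ω (Xop f) p - Xop (L1 ω f) p = 2 * L3 ω f p) ∧
    (∀ p, L3 ω (Xop f) p - Xop (L3 ω f) p = Hop ω f p - 2 * L1 ω f p) ∧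
    (∀ p, L1 ω (L3 ω f) p - L3 ω (L1 ω f) p = 2 * ω ^ 2 * Xop f p) := by
  have hfd : Differentiable ℝ f := hf.differentiable (by simp)
  refine ⟨?_, ?_, ?_⟩ <;> intro p <;>
  · simp only [L1_def, L3_def, Xop_def, Hop_def, pow_two]
    simp (disch := fun_prop) only [dx_sub, dx_add, dx_mul, dx_const, dx_coord1, dx_coord2,
      dy_sub, dy_add, dy_mul, dy_const, dy_coord1, dy_coord2, dy_dx]
    ring
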